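/- Let G be a finite simple graph on n ≥ 2 vertices that is not the complete graph K_n. Then n/2 ≤ dim^J_2(G) ≤ n − 1. Moreover, if dim^J_2(G) = n/2, then n is even and G is isomorphic to the complete multipartite graph K_{2,…,2} with n/2 parts of size 2 (the cocktail-party graph). -/

import Mathlib

open scoped Classical RealInnerProductSpace

noncomputable section

/-- A two-distance representation of a simple graph `G` in `ℝ^d`
(`= EuclideanSpace ℝ (Fin d)`) with distances `a` and `b`, `0 < a ≤ b`: adjacent vertices
are mapped to points at distance `a`, distinct non-adjacent vertices to points at
distance `b`. -/
def IsTwoDistRep {V : Type*} (G : SimpleGraph V) {d : ℕ}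
    (f : V → EuclideanSpace ℝ (Fin d)) (a b : ℝ) : Prop :=
  0 < a ∧ a ≤ b ∧
    (∀ u v, G.Adj u v → dist (f u) (f v) = a) ∧
    (∀ u v, u ≠ v → ¬ G.Adj u v → dist (f u) (f v) = b)

/-- The Euclidean representation number `dim^E_2(G)`: the smallest `d` such that `G` has a
two-distance representation in `ℝ^d`. -/
def dimE2 {V : Type*} (G : SimpleGraph V) : ℕ :=
  sInf {d | ∃ (f : V → EuclideanSpace ℝ (Fin d)) (a b : ℝ), IsTwoDistRep G f a b}

/-- The spherical representation number `dim^S_2(G)`: the smallest `d` such that `G` has a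
two-distance representation in `ℝ^d` whose image lies on a sphere. -/
def dimS2 {V : Type*} (G : SimpleGraph V) : ℕ :=
  sInf {d | ∃ (f : V → EuclideanSpace ℝ (Fin d)) (a b : ℝ)
      (c : EuclideanSpace ℝ (Fin d)) (r : ℝ),
    IsTwoDistRep G f a b ∧ ∀ v, dist c (f v) = r}

/-- The J-spherical representation number `dim^J_2(G)`: the smallest `d` such that `G` has a
two-distance representation in `ℝ^d` with distances `√2` and `b` (`√2 ≤ b`) whose image lies
on the unit sphere centered at the origin. -/
def dimJ2 {V : Type*} (G : SimpleGraph V) : ℕ :=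
  sInf {d | ∃ (f : V → EuclideanSpace ℝ (Fin d)) (b : ℝ),
    IsTwoDistRep G f (Real.sqrt 2) b ∧ ∀ v, ‖f v‖ = 1}

/-- `β_*(G)`: the second distance of the (unique) J-spherical representation of `G` in
dimension `dimJ2 G`. -/
def betaStar {V : Type*} (G : SimpleGraph V) : ℝ :=
  sInf {b : ℝ | ∃ f : V → EuclideanSpace ℝ (Fin (dimJ2 G)),
    IsTwoDistRep G f (Real.sqrt 2) b ∧ ∀ v, ‖f v‖ = 1}

/-- The Cayley–Menger matrix of a graph, with entries in `ℝ[X]`: the extra index `none`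
gives the row and column of `1`s (with `0` in the corner), and for distinct vertices `u, v`
the entry is `1` if they are adjacent and `X` (the variable `t`) otherwise. -/
def cmMatrix {V : Type*} [Fintype V] (G : SimpleGraph V) :
    Matrix (Option V) (Option V) (Polynomial ℝ) := fun i j =>
  match i, j with
  | none, none => 0
  | none, some _ => 1
  | some _, none => 1
  | some u, some v => if u = v then 0 else if G.Adj u v then 1 else Polynomial.X

/-- The Cayley–Menger polynomial `C_G(t)`. -/
def CG {V : Type*} [Fintype V] (G : SimpleGraph V) : Polynomial ℝ :=
  (cmMatrix G).det

/-- The matrix defining `M_G`. -/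
def mMatrix {V : Type*} [Fintype V] (G : SimpleGraph V) :
    Matrix V V (Polynomial ℝ) := fun u v =>
  if u = v then 0 else if G.Adj u v then 1 else Polynomial.X

/-- The polynomial `M_G(t)`. -/
def MG {V : Type*} [Fintype V] (G : SimpleGraph V) : Polynomial ℝ :=
  (mMatrix G).det

/-- `C_G` has a root greater than `1` (i.e. `τ₁(G) < ∞`). -/
def HasTau {V : Type*} [Fintype V] (G : SimpleGraph V) : Prop :=
  ∃ t : ℝ, 1 < t ∧ (CG G).eval t = 0

/-- `τ₁(G)`: the smallest root of `C_G` greater than `1` (junk value if none exists). -/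
def tau1 {V : Type*} [Fintype V] (G : SimpleGraph V) : ℝ :=
  sInf {t : ℝ | 1 < t ∧ (CG G).eval t = 0}

/-- `μ(G)`: the multiplicity of `τ₁(G)` as a root of `C_G`, and `0` if `C_G` has no
root greater than `1`. -/
def muG {V : Type*} [Fintype V] (G : SimpleGraph V) : ℕ :=
  if HasTau G then (CG G).rootMultiplicity (tau1 G) else 0

/-- `F_G = -M_G / (2 C_G)`, viewed as a rational function of `t`. -/
def FG {V : Type*} [Fintype V] (G : SimpleGraph V) : RatFunc ℝ :=
  RatFunc.mk (-(MG G)) (2 * CG G)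

/-- The rational function `F_G` has no pole at `τ₁(G)`: the denominator of the reduced
fraction does not vanish there. -/
def NoPoleAtTau {V : Type*} [Fintype V] (G : SimpleGraph V) : Prop :=
  (FG G).denom.eval (tau1 G) ≠ 0

/-- The value `F_G(τ₁(G))` of the rational function `F_G` at `τ₁(G)`. -/
def FGtau {V : Type*} [Fintype V] (G : SimpleGraph V) : ℝ :=
  (FG G).eval (RingHom.id ℝ) (tau1 G)

/-- The circumradius `R(G)` is finite: `τ₁(G) < ∞` and `F_G` has no pole at `τ₁(G)`.
(Then `R(G) = √(F_G(τ₁(G)))`.) -/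
def RGfin {V : Type*} [Fintype V] (G : SimpleGraph V) : Prop :=
  HasTau G ∧ NoPoleAtTau G

/-- The value of `F_G` at a point `t` which is not a root of `C_G`. -/
def FGval {V : Type*} [Fintype V] (G : SimpleGraph V) (t : ℝ) : ℝ :=
  -((MG G).eval t) / (2 * (CG G).eval t)

/-- `dim^S_2(G, R₀)`: the smallest `d` such that `G` has a two-distance representation in
`ℝ^d` with distances `1` and `b` whose image lies on a sphere of radius at most `R₀`. -/
def dimS2R {V : Type*} (G : SimpleGraph V) (R₀ : ℝ) : ℕ :=
  sInf {d | ∃ (f : V → EuclideanSpace ℝ (Fin d)) (b : ℝ)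
      (c : EuclideanSpace ℝ (Fin d)) (r : ℝ),
    IsTwoDistRep G f 1 b ∧ r ≤ R₀ ∧ ∀ v, dist c (f v) = r}

/-- The join of two graphs: their disjoint union together with all edges between the parts. -/
def graphJoin {V₁ V₂ : Type} (G₁ : SimpleGraph V₁) (G₂ : SimpleGraph V₂) :
    SimpleGraph (V₁ ⊕ V₂) :=
  SimpleGraph.fromRel fun x y =>
    (∃ a b, x = Sum.inl a ∧ y = Sum.inl b ∧ G₁.Adj a b) ∨
    (∃ a b, x = Sum.inr a ∧ y = Sum.inr b ∧ G₂.Adj a b) ∨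
    (∃ a b, x = Sum.inl a ∧ y = Sum.inr b)

/-- The join of a family of graphs: two vertices are adjacent iff they lie in different
summands or are adjacent within their common summand. -/
def familyJoin {ι : Type*} {V : ι → Type*} (G : ∀ i, SimpleGraph (V i)) :
    SimpleGraph (Σ i, V i) :=
  SimpleGraph.fromRel fun x y =>
    x.1 ≠ y.1 ∨ ∃ h : x.1 = y.1, (G y.1).Adj (h ▸ x.2) y.2

/-- A graph is join-indecomposable if it is not isomorphic to a join of two graphs,
each having at least one vertex. -/
def JoinIndecomposable {V : Type} (G : SimpleGraph V) : Prop :=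
  ¬ ∃ (V₁ V₂ : Type) (G₁ : SimpleGraph V₁) (G₂ : SimpleGraph V₂),
      Nonempty V₁ ∧ Nonempty V₂ ∧ Nonempty (G ≃g graphJoin G₁ G₂)

/-- `S` is of Type I in the linear subspace `L`: all points have norm `1`,
`|S| = dim L + 1`, the affine hull of `S` has dimension `dim L`, and the origin lies in the
relative interior of the convex hull of `S`. -/
def TypeI {d : ℕ} (L : Submodule ℝ (EuclideanSpace ℝ (Fin d)))
    (S : Finset (EuclideanSpace ℝ (Fin d))) : Prop :=
  (↑S : Set (EuclideanSpace ℝ (Fin d))) ⊆ (L : Set (EuclideanSpace ℝ (Fin d))) ∧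
  (∀ p ∈ S, ‖p‖ = 1) ∧
  S.card = Module.finrank ℝ L + 1 ∧
  Module.finrank ℝ (affineSpan ℝ (↑S : Set (EuclideanSpace ℝ (Fin d)))).direction =
    Module.finrank ℝ L ∧
  (0 : EuclideanSpace ℝ (Fin d)) ∈
    intrinsicInterior ℝ (convexHull ℝ (↑S : Set (EuclideanSpace ℝ (Fin d))))

/-- `S` is of Type II in the linear subspace `L`: all points have norm `1`,
`|S| = dim L`, the affine hull of `S` has dimension `dim L - 1`, and the origin does not lie
in the affine hull of `S`. -/
def TypeII {d : ℕ} (L : Submodule ℝ (EuclideanSpace ℝ (Fin d)))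
    (S : Finset (EuclideanSpace ℝ (Fin d))) : Prop :=
  (↑S : Set (EuclideanSpace ℝ (Fin d))) ⊆ (L : Set (EuclideanSpace ℝ (Fin d))) ∧
  (∀ p ∈ S, ‖p‖ = 1) ∧
  S.card = Module.finrank ℝ L ∧
  Module.finrank ℝ (affineSpan ℝ (↑S : Set (EuclideanSpace ℝ (Fin d)))).direction =
    Module.finrank ℝ L - 1 ∧
  (0 : EuclideanSpace ℝ (Fin d)) ∉ affineSpan ℝ (↑S : Set (EuclideanSpace ℝ (Fin d)))

/-- A J-spherical two-distance (JSTD) set with second distance `b`: a finite set on the unit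
sphere centered at the origin whose pairwise distances take exactly the two values `√2` and
`b`, where `b > √2`. -/
def IsJSTD {d : ℕ} (S : Finset (EuclideanSpace ℝ (Fin d))) (b : ℝ) : Prop :=
  (∀ p ∈ S, ‖p‖ = 1) ∧ Real.sqrt 2 < b ∧
  (∀ p ∈ S, ∀ q ∈ S, p ≠ q → dist p q = Real.sqrt 2 ∨ dist p q = b) ∧
  (∃ p ∈ S, ∃ q ∈ S, dist p q = Real.sqrt 2) ∧
  (∃ p ∈ S, ∃ q ∈ S, dist p q = b)


/-!
For unit vectors `‖x - y‖² = 2 - 2⟪x, y⟫`, so a J-spherical representation `f` of `G` in `ℝ^d`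
sends edges to orthogonal pairs and non-edges to pairs with inner product `1 - b²/2 ≤ 0`.

Lower bound: nonzero vectors of `ℝ^d` with pairwise non-positive inner products number at most
`2d`. At most two of them lie on the line through one of them, `x`, and projecting the others
onto `xᗮ` keeps them nonzero and pairwise non-acute, so induction on `d` applies. When there are
exactly `2d` vectors, the same count shows that each has a negative multiple among the others.
For unit vectors this is its antipode, which is then the unique non-neighbour of the vertex, so
`G` is the cocktail-party graph.

Upper bound: if `λ` is the largest eigenvalue of the adjacency matrix `A` of `Gᶜ` (positive,
since `Gᶜ` has an edge), then `λ • 1 - A` is positive semidefinite and vanishes on a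
`λ`-eigenvector, so it is the Gram matrix of vectors in `ℝ^(n-1)`; scaled by `λ^(-1/2)` they
form a J-spherical representation.
-/
open Finset Module

section NonAcute

variable {E : Type*} [NormedAddCommGroup E] [InnerProductSpace ℝ E]
  {ι : Type*} {s : Finset ι} {x : ι → E}

theorem card_filter_mem_span_singleton_le_two (hx0 : ∀ i ∈ s, x i ≠ 0)
    (hx : (s : Set ι).Pairwise fun i j => ⟪x i, x j⟫ ≤ 0) (v : E) :
    #{i ∈ s | x i ∈ ℝ ∙ v} ≤ 2 := by
  by_contra! h
  obtain ⟨i, hi, j, hj, k, hk, hij, hik, hjk⟩ := two_lt_card.mp h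
  simp only [mem_filter, Submodule.mem_span_singleton] at hi hj hk
  obtain ⟨hi, a, ha⟩ := hi
  obtain ⟨hj, b, hb⟩ := hj
  obtain ⟨hk, c, hc⟩ := hk
  have hv : 0 < ‖v‖ ^ 2 := by
    have := hx0 i hi
    rw [← ha] at this
    exact pow_pos (norm_pos_iff.mpr (right_ne_zero_of_smul this)) 2
  have hmul {p q : ℝ} (h : ⟪p • v, q • v⟫ ≤ 0) : p * q ≤ 0 := by
    rw [real_inner_smul_left, real_inner_smul_right, real_inner_self_eq_norm_sq,
      ← mul_assoc] at h
    exact nonpos_of_mul_nonpos_left h hv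
  have hab : a * b ≤ 0 := hmul (ha ▸ hb ▸ hx hi hj hij)
  have hac : a * c ≤ 0 := hmul (ha ▸ hc ▸ hx hi hk hik)
  have hbc : b * c ≤ 0 := hmul (hb ▸ hc ▸ hx hj hk hjk)
  have habc : a * b * c ≠ 0 := by
    refine mul_ne_zero (mul_ne_zero ?_ ?_) ?_ <;> rintro rfl
    exacts [hx0 i hi (by rw [← ha, zero_smul]), hx0 j hj (by rw [← hb, zero_smul]),
      hx0 k hk (by rw [← hc, zero_smul])]
  have : 0 < (a * b * c) ^ 2 := by positivity
  nlinarith [mul_nonneg_of_nonpos_of_nonpos hab hac]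

theorem exists_pairwise_inner_nonpos_orthogonal_span_singleton [CompleteSpace E]
    (hx0 : ∀ i ∈ s, x i ≠ 0) (hx : (s : Set ι).Pairwise fun i j => ⟪x i, x j⟫ ≤ 0)
    {i : ι} (hi : i ∈ s) :
    ∃ y : ι → (ℝ ∙ x i)ᗮ, (∀ j ∈ {j ∈ s | x j ∉ ℝ ∙ x i}, y j ≠ 0) ∧
      (({j ∈ s | x j ∉ ℝ ∙ x i} : Finset ι) : Set ι).Pairwise fun j k => ⟪y j, y k⟫ ≤ 0 := by
  set u := x i
  set P := (ℝ ∙ u)ᗮ.orthogonalProjectionOnto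
  have hu : 0 < ‖u‖ ^ 2 := pow_pos (norm_pos_iff.mpr (hx0 i hi)) 2
  refine ⟨fun j => P (x j), fun j hj => ?_, fun j hj k hk hjk => ?_⟩
  · rw [Ne, Submodule.orthogonalProjectionOnto_eq_zero_iff, Submodule.orthogonal_orthogonal]
    exact (mem_filter.mp hj).2
  simp only [coe_filter, Set.mem_ofPred_eq] at hj hk
  have hne {l} (hl : x l ∉ ℝ ∙ u) : l ≠ i := by
    rintro rfl
    exact hl (Submodule.mem_span_singleton_self _)
  have hju : ⟪u, x j⟫ ≤ 0 := real_inner_comm u (x j) ▸ hx hj.1 hi (hne hj.2)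
  have hku : ⟪u, x k⟫ ≤ 0 := real_inner_comm u (x k) ▸ hx hk.1 hi (hne hk.2)
  have hP : ⟪(P (x j) : E), P (x k)⟫ = ⟪x j, x k⟫ - ⟪u, x j⟫ * ⟪u, x k⟫ / ‖u‖ ^ 2 := by
    simp only [P, ← Submodule.starProjection_apply, Submodule.starProjection_orthogonal_val,
      Submodule.starProjection_singleton, inner_sub_left, inner_sub_right,
      real_inner_smul_left, real_inner_smul_right, real_inner_self_eq_norm_sq]
    rw [RCLike.ofReal_real_eq_id, id, real_inner_comm (x j) u]
    field_simp
    ring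
  rw [Submodule.coe_inner, hP]
  have := div_nonneg (mul_nonneg_of_nonpos_of_nonpos hju hku) hu.le
  linarith [hx hj.1 hk.1 hjk]

theorem finrank_orthogonal_span_singleton_add_one [FiniteDimensional ℝ E] {v : E}
    (hv : v ≠ 0) : finrank ℝ (ℝ ∙ v)ᗮ + 1 = finrank ℝ E := by
  rw [← (ℝ ∙ v).finrank_add_finrank_orthogonal, finrank_span_singleton hv, add_comm]

theorem card_le_two_mul_finrank_of_pairwise_inner_nonpos [FiniteDimensional ℝ E]
    (hx0 : ∀ i ∈ s, x i ≠ 0) (hx : (s : Set ι).Pairwise fun i j => ⟪x i, x j⟫ ≤ 0) :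
    #s ≤ 2 * finrank ℝ E := by
  induction hd : finrank ℝ E using Nat.strong_induction_on generalizing E s with
  | _ d ih =>
  obtain rfl | ⟨i, hi⟩ := s.eq_empty_or_nonempty
  · simp
  obtain ⟨y, hy0, hy⟩ := exists_pairwise_inner_nonpos_orthogonal_span_singleton hx0 hx hi
  have hrank := finrank_orthogonal_span_singleton_add_one (hx0 i hi)
  have hfar := ih _ (by omega) hy0 hy rfl
  have hnear := card_filter_mem_span_singleton_le_two hx0 hx (x i)
  have hsplit := card_filter_add_card_filter_not (s := s) (fun j => x j ∈ ℝ ∙ x i)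
  omega

theorem exists_ne_mem_span_singleton_of_card_eq_two_mul_finrank [FiniteDimensional ℝ E]
    (hx0 : ∀ i ∈ s, x i ≠ 0) (hx : (s : Set ι).Pairwise fun i j => ⟪x i, x j⟫ ≤ 0)
    (hs : #s = 2 * finrank ℝ E) {i : ι} (hi : i ∈ s) : ∃ j ∈ s, j ≠ i ∧ x j ∈ ℝ ∙ x i := by
  by_contra! h
  have hnear : #{j ∈ s | x j ∈ ℝ ∙ x i} ≤ #{i} := card_le_card fun j hj =>
    mem_singleton.mpr <| by_contra fun hji => h j (mem_filter.mp hj).1 hji (mem_filter.mp hj).2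
  rw [card_singleton] at hnear
  obtain ⟨y, hy0, hy⟩ := exists_pairwise_inner_nonpos_orthogonal_span_singleton hx0 hx hi
  have hrank := finrank_orthogonal_span_singleton_add_one (hx0 i hi)
  have hfar := card_le_two_mul_finrank_of_pairwise_inner_nonpos hy0 hy
  have hsplit := card_filter_add_card_filter_not (s := s) (fun j => x j ∈ ℝ ∙ x i)
  omega

end NonAcute

theorem dist_sq_eq_two_sub_two_inner {F : Type*} [NormedAddCommGroup F]
    [InnerProductSpace ℝ F] {x y : F} (hx : ‖x‖ = 1) (hy : ‖y‖ = 1) :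
    dist x y ^ 2 = 2 - 2 * ⟪x, y⟫ := by
  rw [dist_eq_norm, norm_sub_sq_real, hx, hy]
  ring

namespace IsTwoDistRep

variable {V : Type*} {G : SimpleGraph V} {d : ℕ} {f : V → EuclideanSpace ℝ (Fin d)} {a b : ℝ}

theorem injective (hf : IsTwoDistRep G f a b) : Function.Injective f := by
  obtain ⟨ha, hab, hadj, hnadj⟩ := hf
  intro u v huv
  by_contra hne
  by_cases h : G.Adj u v
  · linarith [hadj u v h, dist_eq_zero.mpr huv]
  · linarith [hnadj u v hne h, dist_eq_zero.mpr huv]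

theorem inner_eq_zero (hf : IsTwoDistRep G f √2 b) (hf1 : ∀ v, ‖f v‖ = 1) {u v : V}
    (h : G.Adj u v) : ⟪f u, f v⟫ = 0 := by
  have := dist_sq_eq_two_sub_two_inner (hf1 u) (hf1 v)
  rw [hf.2.2.1 u v h, Real.sq_sqrt zero_le_two] at this
  linarith

theorem inner_eq_of_not_adj (hf : IsTwoDistRep G f √2 b) (hf1 : ∀ v, ‖f v‖ = 1) {u v : V}
    (huv : u ≠ v) (h : ¬G.Adj u v) : ⟪f u, f v⟫ = 1 - b ^ 2 / 2 := by
  have := dist_sq_eq_two_sub_two_inner (hf1 u) (hf1 v)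
  rw [hf.2.2.2 u v huv h] at this
  linarith

theorem inner_nonpos (hf : IsTwoDistRep G f √2 b) (hf1 : ∀ v, ‖f v‖ = 1) {u v : V}
    (huv : u ≠ v) : ⟪f u, f v⟫ ≤ 0 := by
  by_cases h : G.Adj u v
  · exact (hf.inner_eq_zero hf1 h).le
  have : √2 ^ 2 ≤ b ^ 2 := pow_le_pow_left₀ (Real.sqrt_nonneg 2) hf.2.1 2
  rw [Real.sq_sqrt zero_le_two] at this
  rw [hf.inner_eq_of_not_adj hf1 huv h]
  linarith

variable [Fintype V]

theorem card_le_two_mul (hf : IsTwoDistRep G f √2 b) (hf1 : ∀ v, ‖f v‖ = 1) :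
    Fintype.card V ≤ 2 * d := by
  simpa using card_le_two_mul_finrank_of_pairwise_inner_nonpos (s := univ) (x := f)
    (fun v _ => norm_ne_zero_iff.mp (by rw [hf1]; exact one_ne_zero))
    (fun u _ v _ huv => hf.inner_nonpos hf1 huv)

theorem existsUnique_compl_adj (hf : IsTwoDistRep G f √2 b) (hf1 : ∀ v, ‖f v‖ = 1)
    (hV : Fintype.card V = 2 * d) (u : V) : ∃! w, Gᶜ.Adj u w := by
  obtain ⟨w, -, hwu, hw⟩ := exists_ne_mem_span_singleton_of_card_eq_two_mul_finrank
    (s := univ) (x := f) (fun v _ => norm_ne_zero_iff.mp (by rw [hf1]; exact one_ne_zero))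
    (fun u _ v _ huv => hf.inner_nonpos hf1 huv) (by simpa using hV) (mem_univ u)
  obtain ⟨c, hc⟩ := Submodule.mem_span_singleton.mp hw
  have hantipodal : ⟪f u, f w⟫ = -1 := by
    have hc1 : |c| = 1 := by simpa [← hc, norm_smul, hf1] using hf1 w
    have hc0 : c ≤ 0 := by
      simpa [← hc, real_inner_smul_right, real_inner_self_eq_norm_sq, hf1] using
        hf.inner_nonpos hf1 (Ne.symm hwu)
    rw [← hc, real_inner_smul_right, real_inner_self_eq_norm_sq, hf1]
    linarith [abs_of_nonpos hc0]
  have hnadj : ¬G.Adj u w := fun h => by linarith [hf.inner_eq_zero hf1 h]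
  refine ⟨w, (G.compl_adj u w).mpr ⟨hwu.symm, hnadj⟩, fun w' (hw' : Gᶜ.Adj u w') => ?_⟩
  rw [SimpleGraph.compl_adj] at hw'
  have hw'antipodal : ⟪f u, f w'⟫ = -1 := by
    rw [hf.inner_eq_of_not_adj hf1 hw'.1 hw'.2, ← hf.inner_eq_of_not_adj hf1 hwu.symm hnadj,
      hantipodal]
  rw [inner_eq_neg_one_iff_of_norm_eq_one (hf1 u) (hf1 _)] at hw'antipodal hantipodal
  exact hf.injective (neg_inj.mp (hw'antipodal.symm.trans hantipodal))

end IsTwoDistRep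

namespace SimpleGraph

variable {V : Type*} {G : SimpleGraph V}

def completeMultipartiteGraphCongr {ι κ : Type*} {V : ι → Type*} {W : κ → Type*} (e : ι ≃ κ)
    (F : ∀ i, V i ≃ W (e i)) : completeMultipartiteGraph V ≃g completeMultipartiteGraph W where
  toEquiv := e.sigmaCongr F
  map_rel_iff' := by simp [Equiv.sigmaCongr]

theorem isCompleteMultipartite_of_existsUnique_compl_adj (h : ∀ u, ∃! w, Gᶜ.Adj u w) :
    G.IsCompleteMultipartite := by
  refine ⟨fun u v w huv hvw => ?_⟩
  obtain rfl | hvu := eq_or_ne v u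
  · exact hvw
  obtain rfl | hvw' := eq_or_ne v w
  · exact huv
  obtain rfl : u = w := (h v).unique ((G.compl_adj v u).mpr ⟨hvu, fun h' => huv h'.symm⟩)
    ((G.compl_adj v w).mpr ⟨hvw', hvw⟩)
  exact G.loopless.irrefl u

theorem card_not_adj_eq_two [Fintype V] (h : ∀ u, ∃! w, Gᶜ.Adj u w) (u : V) :
    Fintype.card {w // ¬G.Adj u w} = 2 := by
  obtain ⟨w, huw, hw⟩ := h u
  rw [Fintype.card_subtype]
  convert card_pair ((G.compl_adj u w).mp huw).1 using 2
  ext x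
  simp only [mem_filter, mem_univ, true_and, mem_insert, mem_singleton]
  refine ⟨fun hx => or_iff_not_imp_left.mpr fun hxu =>
    hw x ((G.compl_adj u x).mpr ⟨Ne.symm hxu, hx⟩), ?_⟩
  rintro (rfl | rfl)
  exacts [G.loopless.irrefl x, ((G.compl_adj u x).mp huw).2]

theorem nonempty_iso_completeMultipartiteGraph_fin_two [Fintype V] {m : ℕ}
    (h : ∀ u, ∃! w, Gᶜ.Adj u w) (hV : Fintype.card V = 2 * m) :
    Nonempty (G ≃g completeMultipartiteGraph fun _ : Fin m => Fin 2) := by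
  set hG := isCompleteMultipartite_of_existsUnique_compl_adj h
  have hpart (c : Quotient hG.setoid) : Fintype.card {x // hG.setoid.r c.out x} = 2 := by
    convert card_not_adj_eq_two h c.out
  have hparts : Fintype.card (Quotient hG.setoid) = m := by
    have := Fintype.card_congr hG.iso.toEquiv
    simp only [Fintype.card_sigma, hpart, sum_const, card_univ, smul_eq_mul] at this
    omega
  exact ⟨hG.iso.trans (completeMultipartiteGraphCongr (Fintype.equivFinOfCardEq hparts)
    fun c => Fintype.equivFinOfCardEq (hpart c))⟩

end SimpleGraph

theorem Matrix.IsHermitian.exists_inner_eq_eigenvalue_smul_one_sub {ι : Type*} [Fintype ι]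
    [DecidableEq ι] {A : Matrix ι ι ℝ} (hA : A.IsHermitian) {k : ι}
    (hk : ∀ j, hA.eigenvalues j ≤ hA.eigenvalues k) :
    ∃ x : ι → EuclideanSpace ℝ (Fin (Fintype.card ι - 1)),
      ∀ i l, ⟪x i, x l⟫ = (hA.eigenvalues k • (1 : Matrix ι ι ℝ) - A) i l := by
  set U : Matrix ι ι ℝ := (hA.eigenvectorUnitary : Matrix ι ι ℝ)
  set w : ι → ℝ := fun j => hA.eigenvalues k - hA.eigenvalues j
  have hdiag : hA.eigenvalues k • (1 : Matrix ι ι ℝ) - A = U * diagonal w * star U := by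
    have hU : U * star U = 1 := Unitary.mul_star_self_of_mem hA.eigenvectorUnitary.2
    have hA' : A = U * diagonal hA.eigenvalues * star U := by
      simpa only [RCLike.ofReal_real_eq_id, Function.id_comp, Unitary.conjStarAlgAut_apply]
        using hA.spectral_theorem
    calc hA.eigenvalues k • (1 : Matrix ι ι ℝ) - A
        = U * (hA.eigenvalues k • 1 - diagonal hA.eigenvalues) * star U := by
          rw [Matrix.mul_sub, Matrix.sub_mul, Matrix.mul_smul, Matrix.smul_mul, Matrix.mul_one,
            hU, ← hA']
      _ = U * diagonal w * star U := by
          rw [smul_one_eq_diagonal, diagonal_sub]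
  -- the weight `w k` vanishes, so the coordinate `k` can be dropped
  have hsum (i l : ι) : (hA.eigenvalues k • (1 : Matrix ι ι ℝ) - A) i l =
      ∑ j : {j // j ≠ k}, (U i j * √(w j)) * (U l j * √(w j)) := by
    rw [hdiag, Matrix.mul_apply, ← sum_erase univ (a := k) (by simp [w]),
      sum_subtype (univ.erase k) (p := (· ≠ k)) (by simp)]
    refine Fintype.sum_congr _ _ fun j => ?_
    rw [mul_diagonal, star_apply, star_trivial, mul_mul_mul_comm,
      Real.mul_self_sqrt (sub_nonneg.mpr (hk j))]
    ring
  obtain e : {j // j ≠ k} ≃ Fin (Fintype.card ι - 1) := Fintype.equivFinOfCardEq (by simp)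
  refine ⟨fun i => WithLp.toLp 2 fun m => U i (e.symm m) * √(w (e.symm m)), fun i l => ?_⟩
  rw [hsum, ← e.symm.sum_comp]
  exact Fintype.sum_congr _ _ fun _ => mul_comm _ _

theorem isTwoDistRep_of_inner_eq_smul_one_sub_adjMatrix {V : Type*} {G : SimpleGraph V}
    {d : ℕ} {c : ℝ} (hc : 0 < c) {x : V → EuclideanSpace ℝ (Fin d)}
    (hx : ∀ u v, ⟪x u, x v⟫ = (c • (1 : Matrix V V ℝ) - Gᶜ.adjMatrix ℝ) u v) :
    IsTwoDistRep G (fun v => (√c)⁻¹ • x v) √2 √(2 + 2 / c) ∧ ∀ v, ‖(√c)⁻¹ • x v‖ = 1 := by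
  have hy (u v : V) : ⟪(√c)⁻¹ • x u, (√c)⁻¹ • x v⟫ =
      (c • (1 : Matrix V V ℝ) - Gᶜ.adjMatrix ℝ) u v / c := by
    rw [real_inner_smul_left, real_inner_smul_right, hx, ← mul_assoc, ← mul_inv,
      Real.mul_self_sqrt hc.le, inv_mul_eq_div]
  have hnorm (v : V) : ‖(√c)⁻¹ • x v‖ = 1 := by
    have := hy v v
    simp only [real_inner_self_eq_norm_sq, Matrix.sub_apply, Matrix.smul_apply,
      Matrix.one_apply_eq, SimpleGraph.adjMatrix_apply, SimpleGraph.irrefl, if_false,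
      smul_eq_mul, mul_one, sub_zero, div_self hc.ne'] at this
    exact (pow_eq_one_iff_of_nonneg (norm_nonneg _) two_ne_zero).mp this
  have hdist (u v : V) : dist ((√c)⁻¹ • x u) ((√c)⁻¹ • x v) =
      √(2 - 2 * ((c • (1 : Matrix V V ℝ) - Gᶜ.adjMatrix ℝ) u v / c)) := by
    rw [← hy, ← dist_sq_eq_two_sub_two_inner (hnorm u) (hnorm v), Real.sqrt_sq dist_nonneg]
  refine ⟨⟨by positivity, Real.sqrt_le_sqrt (by linarith [div_pos two_pos hc]),
    fun u v h => ?_, fun u v huv h => ?_⟩, hnorm⟩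
  · simp [hdist, SimpleGraph.adjMatrix_apply, h, G.ne_of_adj h]
  · simp [hdist, SimpleGraph.adjMatrix_apply, h, huv, div_eq_mul_inv]

theorem exists_isTwoDistRep_sqrt_two_of_ne_top {V : Type*} [Fintype V] {G : SimpleGraph V}
    (hG : G ≠ ⊤) : ∃ (f : V → EuclideanSpace ℝ (Fin (Fintype.card V - 1))) (b : ℝ),
      IsTwoDistRep G f √2 b ∧ ∀ v, ‖f v‖ = 1 := by
  obtain ⟨u, v, huv⟩ := SimpleGraph.ne_bot_iff_exists_adj.mp (compl_eq_bot.not.mpr hG)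
  have hA := Gᶜ.isHermitian_adjMatrix ℝ
  obtain ⟨k, -, hk⟩ := exists_max_image univ hA.eigenvalues ⟨u, mem_univ u⟩
  obtain ⟨x, hx⟩ := hA.exists_inner_eq_eigenvalue_smul_one_sub fun j => hk j (mem_univ j)
  have hxu : ⟪x u, x u⟫ = hA.eigenvalues k := by
    rw [hx]
    simp
  have hxuv : ⟪x u, x v⟫ = -1 := by simp [hx, huv, huv.ne]
  have hpos : 0 < hA.eigenvalues k := by
    refine lt_of_le_of_ne (hxu ▸ real_inner_self_nonneg) fun h0 => ?_
    have : x u = 0 := inner_self_eq_zero.mp (hxu.trans h0.symm)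
    simp [this] at hxuv
  obtain ⟨hrep, hnorm⟩ := isTwoDistRep_of_inner_eq_smul_one_sub_adjMatrix hpos hx
  exact ⟨_, _, hrep, hnorm⟩

theorem dimJ2_le {V : Type*} {G : SimpleGraph V} {d : ℕ} {f : V → EuclideanSpace ℝ (Fin d)}
    {b : ℝ} (hf : IsTwoDistRep G f √2 b) (hf1 : ∀ v, ‖f v‖ = 1) : dimJ2 G ≤ d :=
  Nat.sInf_le ⟨f, b, hf, hf1⟩

theorem exists_isTwoDistRep_dimJ2 {V : Type*} {G : SimpleGraph V} {d : ℕ}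
    {f : V → EuclideanSpace ℝ (Fin d)} {b : ℝ} (hf : IsTwoDistRep G f √2 b)
    (hf1 : ∀ v, ‖f v‖ = 1) : ∃ (f : V → EuclideanSpace ℝ (Fin (dimJ2 G))) (b : ℝ),
      IsTwoDistRep G f √2 b ∧ ∀ v, ‖f v‖ = 1 :=
  Nat.sInf_mem (s := {d | ∃ (f : V → EuclideanSpace ℝ (Fin d)) (b : ℝ),
    IsTwoDistRep G f √2 b ∧ ∀ v, ‖f v‖ = 1}) ⟨d, f, b, hf, hf1⟩

theorem dimJ2_bounds_general (n : ℕ) (G : SimpleGraph (Fin n)) (hG : G ≠ ⊤) :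
    (n : ℝ) / 2 ≤ (dimJ2 G : ℝ) ∧ dimJ2 G ≤ n - 1 ∧
    ((dimJ2 G : ℝ) = (n : ℝ) / 2 → Even n ∧
      Nonempty (G ≃g SimpleGraph.completeMultipartiteGraph
        fun _ : Fin (dimJ2 G) => Fin 2)) := by
  obtain ⟨f₀, b₀, hf₀, hf₀1⟩ := exists_isTwoDistRep_sqrt_two_of_ne_top hG
  have hupper : dimJ2 G ≤ n - 1 := by simpa using dimJ2_le hf₀ hf₀1
  obtain ⟨f, b, hf, hf1⟩ := exists_isTwoDistRep_dimJ2 hf₀ hf₀1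
  have hlower : n ≤ 2 * dimJ2 G := by simpa using hf.card_le_two_mul hf1
  refine ⟨by rw [div_le_iff₀ two_pos]; exact_mod_cast hlower.trans_eq (mul_comm _ _), hupper,
    fun h => ?_⟩
  have hn : n = 2 * dimJ2 G := by
    rw [eq_div_iff two_ne_zero] at h
    exact_mod_cast h.symm.trans (mul_comm _ _)
  have hcard : Fintype.card (Fin n) = 2 * dimJ2 G := by simpa using hn
  exact ⟨⟨dimJ2 G, by omega⟩, SimpleGraph.nonempty_iso_completeMultipartiteGraph_fin_two
    (hf.existsUnique_compl_adj hf1 hcard) hcard⟩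

/-- For a non-complete graph `G` on `n ≥ 2` vertices,
`n/2 ≤ dim^J_2(G) ≤ n - 1`; moreover if `dim^J_2(G) = n/2` then `n` is even and `G` is the
cocktail-party graph `K_{2,…,2}` with `n/2` parts. -/
theorem dimJ2_bounds (n : ℕ) (hn : 2 ≤ n) (G : SimpleGraph (Fin n)) (hG : G ≠ ⊤) :
    (n : ℝ) / 2 ≤ (dimJ2 G : ℝ) ∧ dimJ2 G ≤ n - 1 ∧
    ((dimJ2 G : ℝ) = (n : ℝ) / 2 → Even n ∧
      Nonempty (G ≃g SimpleGraph.completeMultipartiteGraph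
        fun _ : Fin (dimJ2 G) => Fin 2)) :=
  dimJ2_bounds_general n G hG
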